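/- arXiv:1706.08390 — 3 statements merged into one kernel-verified Lean document; each statement's English description precedes it below -/
import Mathlib

section
/- Fix integers r ≥ 2 and m ≥ r. The polynomials g_r(x), g_{r+1}(x), ..., g_m(x), x^{m-r+1}, x^{m-r+2}, ..., x^{m-1}, where g_k(x) = ∑_{i=0}^{r-1} C(k,i)(1-x)^i x^{k-i-1}, form a basis of the vector space of real polynomials of degree at most m-1. -/
/-!
All the polynomials have degree `< m`, and the `i`-th one has lowest monomial `x^i`: for
`g_{r+i}` the only summand reaching down to `x^i` is the one with index `r-1`, which is
`C(r+i, r-1) x^i (1 - x)^(r-1)`. Hence the coefficient matrix with respect to the monomial basis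
is triangular with nonzero diagonal.
-/

open Polynomial

namespace Polynomial

section BinomialLowerSum

variable (R : Type*) [CommRing R]

noncomputable def binomialLowerSum (r k : ℕ) : R[X] :=
  ∑ i ∈ Finset.range r, (k.choose i : R) • ((1 - X) ^ i * X ^ (k - i - 1))

variable {R}

theorem binomialLowerSum_mem_degreeLT {r k : ℕ} (hrk : r ≤ k) :
    binomialLowerSum R r k ∈ degreeLT R k := by
  refine Submodule.sum_mem _ fun i hi => Submodule.smul_mem _ _ ?_
  have hi : i < k := (Finset.mem_range.mp hi).trans_le hrk
  have hdeg : ((1 - X : R[X]) ^ i * X ^ (k - i - 1)).natDegree ≤ k - 1 := by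
    rw [show k - 1 = i + (k - i - 1) by omega]
    compute_degree
  rw [mem_degreeLT]
  exact (degree_le_of_natDegree_le hdeg).trans_lt (by exact_mod_cast Nat.sub_lt (by omega) one_pos)

theorem coeff_binomialLowerSum_of_lt {r k j : ℕ} (hj : j < k - r) :
    (binomialLowerSum R r k).coeff j = 0 := by
  rw [binomialLowerSum, finsetSum_coeff]
  refine Finset.sum_eq_zero fun i hi => ?_
  have hi := Finset.mem_range.mp hi
  rw [coeff_smul, coeff_mul_X_pow', if_neg (by omega), smul_zero]

theorem coeff_binomialLowerSum_sub {r k : ℕ} (hr : 0 < r) (hrk : r ≤ k) :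
    (binomialLowerSum R r k).coeff (k - r) = k.choose (r - 1) := by
  rw [binomialLowerSum, finsetSum_coeff, Finset.sum_eq_single_of_mem (r - 1) (by simpa using hr)]
  · rw [coeff_smul, coeff_mul_X_pow', if_pos (by omega), show k - r - (k - (r - 1) - 1) = 0 by omega]
    simp [coeff_zero_eq_eval_zero]
  · intro i hi hne
    have hi := Finset.mem_range.mp hi
    rw [coeff_smul, coeff_mul_X_pow', if_neg (by omega), smul_zero]

end BinomialLowerSum

theorem exists_basis_degreeLT_of_coeff_triangular {K : Type*} [Field K] {m : ℕ}
    (v : Fin m → K[X]) (hv : ∀ i, v i ∈ degreeLT K m)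
    (hlow : ∀ i j : Fin m, j < i → (v i).coeff j = 0) (hdiag : ∀ i, (v i).coeff i ≠ 0) :
    ∃ b : Module.Basis (Fin m) K (degreeLT K m), ∀ i, (b i : K[X]) = v i := by
  let w : Fin m → degreeLT K m := fun i => ⟨v i, hv i⟩
  let M : Matrix (Fin m) (Fin m) K := .of fun i j => (v i).coeff j
  have hdet : M.det ≠ 0 := by
    rw [Matrix.det_of_isUpperTriangular (M := M) fun i j hji => hlow i j hji]
    exact Finset.prod_ne_zero_iff.mpr fun i _ => hdiag i
  have hw : LinearIndependent K w :=
    .of_comp (degreeLTEquiv K m).toLinearMap (Matrix.linearIndependent_rows_of_det_ne_zero hdet)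
  have : FiniteDimensional K (degreeLT K m) := (degreeLTEquiv K m).symm.finiteDimensional
  have hcard : Fintype.card (Fin m) = Module.finrank K (degreeLT K m) := by
    rw [(degreeLTEquiv K m).finrank_eq, Module.finrank_fin_fun, Fintype.card_fin]
  exact ⟨basisOfLinearIndependentOfCardEqFinrank' w hw hcard, fun i => by simp [w]⟩

end Polynomial

/-- Fix integers `r ≥ 2` and `m ≥ r`. The polynomials
`g_r, g_{r+1}, …, g_m, x^{m-r+1}, …, x^{m-1}`, where
`g_k(x) = ∑_{i=0}^{r-1} C(k,i)(1-x)^i x^(k-i-1)`, form a basis of the space of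
real polynomials of degree at most `m-1` (i.e. of degree `< m`). -/
theorem stmt_3 (r m : ℕ) (hr : 2 ≤ r) (hm : r ≤ m) :
    let g : ℕ → Polynomial ℝ := fun k =>
      ∑ i ∈ Finset.range r, (k.choose i : ℝ) • ((1 - X) ^ i * X ^ (k - i - 1))
    let v : Fin m → Polynomial ℝ := fun i =>
      if (i : ℕ) < m - r + 1 then g (r + i) else X ^ (i : ℕ)
    ∃ b : Module.Basis (Fin m) ℝ (Polynomial.degreeLT ℝ m),
      ∀ i : Fin m, (b i : Polynomial ℝ) = v i := by
  intro g v
  have hg : ∀ k, g k = binomialLowerSum ℝ r k := fun _ => rfl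
  refine exists_basis_degreeLT_of_coeff_triangular v (fun i => ?_) (fun i j hji => ?_) (fun i => ?_)
  all_goals by_cases hi : (i : ℕ) < m - r + 1 <;> simp only [v, hi, if_true, if_false, hg]
  · exact degreeLT_mono (by omega) (binomialLowerSum_mem_degreeLT (Nat.le_add_right r i))
  · exact mem_degreeLT.mpr ((degree_X_pow_le _).trans_lt (by exact_mod_cast i.isLt))
  · exact coeff_binomialLowerSum_of_lt (by simpa using hji)
  · rw [coeff_X_pow, if_neg (by omega)]
  · have hcoeff := coeff_binomialLowerSum_sub (R := ℝ) (by omega : 0 < r) (Nat.le_add_right r i)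
    rw [Nat.add_sub_cancel_left] at hcoeff
    rw [hcoeff]
    exact_mod_cast (Nat.choose_pos (by omega)).ne'
  · simp
end

section
/- Fix an integer r ≥ 2 and let ξ_k = (r-1)/(k(k-1)) for k ≥ r. Then ∑_{k=r}^∞ ξ_k = 1, and for every x ∈ (0,1], ∑_{k=r}^∞ ξ_k g_k(x) = 1, where g_k(x) = ∑_{i=0}^{r-1} C(k,i)(1-x)^i x^{k-i-1}. -/
/-!
With `p = 1 - x`, write `F_s(k) = ∑_{i<s} C(k,i) p^i x^(k-i)` for the first `s` terms of the
binomial expansion of `(p + x)^k = 1`, so that `g_k(x) = F_r(k) / x`. The series telescopes against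
`T_k = (r-1) F_r(k) / ((k-1) x) - (p/x) F_{r-1}(k-1)`: Pascal's rule
`F_s(k+1) = F_s(k) - C(k,s-1) p^s x^(k-s+1)` and `k C(k-1,r-2) = (r-1) C(k,r-1)` give
`T_k - T_{k+1} = ξ_k g_k(x)`, the binomial theorem gives `T_r = 1`, and for `x < 1` each term of
`F_s(k)` is a polynomial in `k` times `x^k`, so `T_k → 0`. At `x = 1` only `i = 0` survives in
`g_k`, so `g_k(1) = 1` and the claim is `∑ ξ_k = 1`, which telescopes against `(r-1)/(k-1)`.
-/

open Filter Finset Topology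

section BinomialPartialSum

variable {R : Type*}

noncomputable def binomialPartialSum [CommSemiring R] (p q : R) (s m : ℕ) : R :=
  ∑ i ∈ range s, (m.choose i : R) * p ^ i * q ^ (m - i)

section CommSemiring

variable [CommSemiring R] (p q : R)

theorem binomialPartialSum_succ_self (m : ℕ) : binomialPartialSum p q (m + 1) m = (p + q) ^ m := by
  rw [add_pow, binomialPartialSum]
  exact sum_congr rfl fun i _ => by ring

theorem binomialPartialSum_self_add_pow (m : ℕ) :
    binomialPartialSum p q m m + p ^ m = (p + q) ^ m := by
  rw [← binomialPartialSum_succ_self, binomialPartialSum, binomialPartialSum, sum_range_succ]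
  simp

theorem mul_sum_choose_mul_pow_pred {s m : ℕ} (hsm : s ≤ m) :
    q * ∑ i ∈ range s, (m.choose i : R) * p ^ i * q ^ (m - i - 1) = binomialPartialSum p q s m := by
  rw [mul_sum, binomialPartialSum]
  refine sum_congr rfl fun i hi => ?_
  have hqi : q ^ (m - i) = q * q ^ (m - i - 1) := by
    rw [← pow_succ']; congr 1; have := mem_range.1 hi; omega
  rw [hqi]
  ring

end CommSemiring

theorem binomialPartialSum_succ_succ_add [CommRing R] (p q : R) (s m : ℕ) :
    binomialPartialSum p q (s + 1) (m + 1) + m.choose s * p ^ (s + 1) * q ^ (m - s) =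
      (p + q) * binomialPartialSum p q (s + 1) m := by
  induction s with
  | zero =>
    simp only [binomialPartialSum, zero_add, range_one, sum_singleton, Nat.choose_zero_right,
      Nat.cast_one, pow_zero, mul_one, tsub_zero, one_mul, pow_one]
    ring
  | succ s ih =>
    have hq : (m.choose (s + 1) : R) * q ^ (m - s) = m.choose (s + 1) * q * q ^ (m - (s + 1)) := by
      rcases lt_or_ge s m with hsm | hsm
      · rw [mul_assoc, ← pow_succ', show m - (s + 1) + 1 = m - s by omega]
      · simp [Nat.choose_eq_zero_of_lt (show m < s + 1 by omega)]
    have hL : binomialPartialSum p q (s + 2) (m + 1) = binomialPartialSum p q (s + 1) (m + 1) +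
        (m + 1).choose (s + 1) * p ^ (s + 1) * q ^ (m - s) := by
      rw [binomialPartialSum, sum_range_succ, Nat.add_sub_add_right, binomialPartialSum]
    have hR : binomialPartialSum p q (s + 2) m = binomialPartialSum p q (s + 1) m +
        m.choose (s + 1) * p ^ (s + 1) * q ^ (m - (s + 1)) := sum_range_succ _ _
    rw [hL, hR, Nat.choose_succ_succ]
    push_cast
    linear_combination ih + p ^ (s + 1) * hq

theorem tendsto_binomialPartialSum_atTop [NormedCommRing R] [HasSummableGeomSeries R]
    (p : R) {q : R} (hq : ‖q‖ < 1) (s : ℕ) :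
    Tendsto (fun m => binomialPartialSum p q s m) atTop (𝓝 0) := by
  have hterm (i : ℕ) : Tendsto (fun m => (m.choose i : R) * p ^ i * q ^ (m - i)) atTop (𝓝 0) := by
    rw [← tendsto_add_atTop_iff_nat i]
    simpa [mul_right_comm _ (p ^ i)] using
      ((summable_choose_mul_geometric_of_norm_lt_one i hq).tendsto_atTop_zero).mul_const (p ^ i)
  simpa [binomialPartialSum] using tendsto_finsetSum (range s) fun i _ => hterm i

end BinomialPartialSum

theorem hasSum_of_sub_succ {f g : ℕ → ℝ} {l : ℝ} (hg : ∀ n, 0 ≤ g n)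
    (hfg : ∀ n, f n - f (n + 1) = g n) (hf : Tendsto f atTop (𝓝 l)) : HasSum g (f 0 - l) := by
  refine (hasSum_iff_tendsto_nat_of_nonneg hg _).2 ?_
  simp_rw [← hfg, sum_range_sub']
  exact tendsto_const_nhds.sub hf

theorem hasSum_inv_mul_sub_one {a : ℝ} (ha : 1 < a) :
    HasSum (fun j : ℕ => ((j + a) * (j + a - 1))⁻¹) (a - 1)⁻¹ := by
  have hpos (j : ℕ) : 0 < (j : ℝ) + a - 1 := by linarith [j.cast_nonneg (α := ℝ)]
  have hlim : Tendsto (fun j : ℕ => ((j : ℝ) + a - 1)⁻¹) atTop (𝓝 0) :=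
    tendsto_inv_atTop_zero.comp <| tendsto_atTop_add_const_right _ _ <|
      tendsto_atTop_add_const_right _ _ tendsto_natCast_atTop_atTop
  simpa using hasSum_of_sub_succ
    (fun j => inv_nonneg.2 (mul_nonneg (by linarith [hpos j]) (hpos j).le))
    (fun j => by have := hpos j; have := hpos (j + 1); push_cast at *; field_simp; ring) hlim

noncomputable def tailClosedForm (r : ℕ) (x : ℝ) (k : ℕ) : ℝ :=
  (r - 1) * binomialPartialSum (1 - x) x r k / ((k - 1) * x) -
    (1 - x) / x * binomialPartialSum (1 - x) x (r - 1) (k - 1)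

section TailClosedForm

variable {r : ℕ} {x : ℝ}

theorem tailClosedForm_self (hr : 2 ≤ r) (hx : x ≠ 0) : tailClosedForm r x r = 1 := by
  obtain ⟨s, rfl⟩ := Nat.exists_eq_add_of_le' hr
  have h₁ := binomialPartialSum_self_add_pow (1 - x) x (s + 2)
  have h₂ := binomialPartialSum_self_add_pow (1 - x) x (s + 1)
  rw [sub_add_cancel, one_pow] at h₁ h₂
  have hs : ((s + 2 : ℕ) : ℝ) - 1 = s + 1 := by push_cast; ring
  rw [tailClosedForm, show s + 2 - 1 = s + 1 by omega, hs]
  field_simp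
  linear_combination h₁ - (1 - x) * h₂

theorem tailClosedForm_sub_succ (hr : 2 ≤ r) {k : ℕ} (hrk : r ≤ k) (hx : x ≠ 0) :
    tailClosedForm r x k - tailClosedForm r x (k + 1) =
      (r - 1) / (k * (k - 1)) *
        ∑ i ∈ range r, (k.choose i : ℝ) * (1 - x) ^ i * x ^ (k - i - 1) := by
  obtain ⟨s, rfl⟩ := Nat.exists_eq_add_of_le' hr
  obtain ⟨m, rfl⟩ := Nat.exists_eq_add_of_le' (show 1 ≤ k by omega)
  have hm : (m : ℝ) ≠ 0 := by norm_cast; omega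
  have hA := binomialPartialSum_succ_succ_add (1 - x) x (s + 1) (m + 1)
  have hB := binomialPartialSum_succ_succ_add (1 - x) x s m
  have hC : ((m + 1 : ℕ) : ℝ) * m.choose s = (m + 1).choose (s + 1) * (s + 1) := by
    exact_mod_cast Nat.add_one_mul_choose_eq m s
  have hg : ∑ i ∈ range (s + 2), ((m + 1).choose i : ℝ) * (1 - x) ^ i * x ^ (m + 1 - i - 1) =
      binomialPartialSum (1 - x) x (s + 2) (m + 1) / x := by
    rw [eq_div_iff hx, mul_comm, mul_sum_choose_mul_pow_pred _ _ hrk]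
  rw [sub_add_cancel, one_mul] at hA hB
  rw [Nat.add_sub_add_right] at hA
  rw [hg, tailClosedForm, tailClosedForm, show s + 2 - 1 = s + 1 by omega,
    Nat.add_sub_cancel, Nat.add_sub_cancel]
  push_cast at hC ⊢
  rw [add_sub_cancel_right, add_sub_cancel_right]
  field_simp
  linear_combination -(s + 1) * m * hA + (1 - x) * m * (m + 1) * hB -
    m * (1 - x) ^ (s + 2) * x ^ (m - s) * hC

theorem tendsto_tailClosedForm_atTop (hx₀ : 0 < x) (hx₁ : x < 1) :
    Tendsto (tailClosedForm r x) atTop (𝓝 0) := by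
  have hx : ‖x‖ < 1 := by rwa [Real.norm_of_nonneg hx₀.le]
  have h₁ := tendsto_binomialPartialSum_atTop (1 - x) hx r
  have h₂ := (tendsto_binomialPartialSum_atTop (1 - x) hx (r - 1)).comp (tendsto_sub_atTop_nat 1)
  have h₃ : Tendsto (fun k : ℕ => ((k : ℝ) - 1)⁻¹) atTop (𝓝 0) :=
    tendsto_inv_atTop_zero.comp <| tendsto_atTop_add_const_right _ _ tendsto_natCast_atTop_atTop
  have := ((h₁.mul h₃).const_mul ((r - 1) / x)).sub (h₂.const_mul ((1 - x) / x))
  rw [mul_zero, mul_zero, mul_zero, sub_zero] at this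
  refine this.congr fun k => ?_
  simp only [tailClosedForm, Function.comp, div_eq_mul_inv, mul_inv]
  ring

end TailClosedForm

theorem hasSum_mul_sum_choose_mul_pow {r : ℕ} (hr : 2 ≤ r) {x : ℝ} (hx₀ : 0 < x) (hx₁ : x < 1) :
    HasSum (fun j : ℕ => ((r : ℝ) - 1) / ((j + r) * ((j + r) - 1)) *
      ∑ i ∈ range r, ((j + r).choose i : ℝ) * (1 - x) ^ i * x ^ (j + r - i - 1)) 1 := by
  have hp : 0 < 1 - x := sub_pos.2 hx₁
  have hr' : (1 : ℝ) ≤ r - 1 := by linarith [show (2 : ℝ) ≤ r by exact_mod_cast hr]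
  have hnonneg (j : ℕ) : 0 ≤ ((r : ℝ) - 1) / ((j + r) * ((j + r) - 1)) *
      ∑ i ∈ range r, ((j + r).choose i : ℝ) * (1 - x) ^ i * x ^ (j + r - i - 1) := by
    have : (0 : ℝ) ≤ j := j.cast_nonneg
    refine mul_nonneg (div_nonneg (by linarith) (mul_nonneg (by linarith) (by linarith))) ?_
    exact sum_nonneg fun i _ => by positivity
  have hstep (j : ℕ) := tailClosedForm_sub_succ hr (Nat.le_add_left r j) hx₀.ne'
  push_cast at hstep
  have := hasSum_of_sub_succ hnonneg (f := fun j => tailClosedForm r x (j + r))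
    (fun j => by simpa [add_right_comm] using hstep j)
    ((tendsto_tailClosedForm_atTop hx₀ hx₁).comp (tendsto_add_atTop_nat r))
  simpa [tailClosedForm_self hr hx₀.ne'] using this

/-- Fix an integer `r ≥ 2` and let `ξ_k = (r-1)/(k(k-1))` for `k ≥ r`
(here indexed by `k = j + r`, `j : ℕ`). Then `∑_{k=r}^∞ ξ_k = 1`, and for every
`x ∈ (0,1]`, `∑_{k=r}^∞ ξ_k g_k(x) = 1`, where
`g_k(x) = ∑_{i=0}^{r-1} C(k,i)(1-x)^i x^(k-i-1)`. -/
theorem stmt_5 (r : ℕ) (hr : 2 ≤ r) :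
    (∑' j : ℕ, ((r : ℝ) - 1) / ((j + r) * ((j + r) - 1)) = 1) ∧
    ∀ x ∈ Set.Ioc (0 : ℝ) 1,
      (∑' j : ℕ, ((r : ℝ) - 1) / ((j + r) * ((j + r) - 1)) *
        (∑ i ∈ Finset.range r,
          ((j + r).choose i : ℝ) * (1 - x) ^ i * x ^ (j + r - i - 1))) = 1 := by
  have hr₁ : (1 : ℝ) < r := by exact_mod_cast hr
  have hξ : HasSum (fun j : ℕ => ((r : ℝ) - 1) / ((j + r) * ((j + r) - 1))) 1 := by
    simpa [div_eq_mul_inv, mul_inv_cancel₀ (sub_ne_zero.2 hr₁.ne')] using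
      (hasSum_inv_mul_sub_one hr₁).mul_left ((r : ℝ) - 1)
  refine ⟨hξ.tsum_eq, fun x ⟨hx₀, hx₁⟩ => ?_⟩
  rcases hx₁.lt_or_eq with hx₁ | rfl
  · exact (hasSum_mul_sum_choose_mul_pow hr hx₀ hx₁).tsum_eq
  · obtain ⟨s, rfl⟩ := Nat.exists_eq_add_of_le' (show 1 ≤ r by omega)
    simpa [sum_range_succ'] using hξ.tsum_eq
end

section
/- Fix integers r ≥ 2, ν ≥ 1 and let χ_k = (r-1)/(k(k-1)) for r ≤ k ≤ ν+r-1 and χ_k = 0 for k ≥ ν+r. Then g_χ(x) := ∑_{k=r}^{ν+r-1} χ_k g_k(x) is a polynomial of degree at most ν+r-2, and 1 - g_χ(x) = ∑_{k=ν+r}^∞ (r-1)/(k(k-1)) g_k(x) = x^ν P(x) for a polynomial P of degree at most r-2 satisfying P(x) > 0 for all x ∈ [0,1]. -/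
/-!
Write `g_k = X^(k-r) h_k`, where `h_k` lives in the basis `(1-X)^i X^(r-1-i)`, `i < r`, of
polynomials of degree `< r`. In that basis let `Q_M` have the coefficients
`C(M,i) (M(r-1-i) + i) / (M(M-1))`. Then `Q_r = 1` by the binomial theorem, and after elevating
the basis to degree `r` a Pascal-rule computation gives `Q_M = X Q_{M+1} + χ_M h_M`; by induction
`1 - ∑_{k=r}^{r+n-1} χ_k g_k = X^n Q_{r+n}`, and `P = Q_{r+ν}`.

All coefficients of `Q_M` are positive, so `P > 0` on `[0,1]`, and the degree of `P` drops to
`r - 2` because `1 - g_χ` has degree `≤ ν + r - 2`. Finally `x^n Q_{r+n}(x) → 0` on `[0,1]`: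
it equals `(r-1)/(r+n-1)` at `x = 1` and is `O(n^r x^n)` for `x < 1`, so the partial sums
`1 - x^n Q_{r+n}(x)` of the series converge to `1 - g_χ(x)`.
-/

open Polynomial Finset Filter Topology

section CommRing

variable (R : Type*) [CommRing R]

noncomputable def bernsteinMonomial (n i : ℕ) : R[X] := (1 - X) ^ i * X ^ (n - i)

noncomputable def binomTail (r k : ℕ) : R[X] :=
  ∑ i ∈ range r, (k.choose i : R) • ((1 - X) ^ i * X ^ (k - i - 1))

variable {R}

theorem bernsteinMonomial_eq_add {n i : ℕ} (hi : i ≤ n) :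
    bernsteinMonomial R n i =
      bernsteinMonomial R (n + 1) i + bernsteinMonomial R (n + 1) (i + 1) := by
  simp only [bernsteinMonomial, Nat.succ_sub hi, Nat.add_sub_add_right, pow_succ]
  ring

theorem X_mul_bernsteinMonomial {n i : ℕ} (hi : i ≤ n) :
    X * bernsteinMonomial R n i = bernsteinMonomial R (n + 1) i := by
  simp only [bernsteinMonomial, Nat.succ_sub hi, pow_succ]
  ring

theorem sum_choose_smul_bernsteinMonomial (n : ℕ) :
    ∑ i ∈ range (n + 1), (n.choose i : R) • bernsteinMonomial R n i = 1 := by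
  have h := (add_pow (1 - X : R[X]) X n).symm
  rw [sub_add_cancel, one_pow] at h
  rw [← h]
  refine sum_congr rfl fun i _ => ?_
  rw [bernsteinMonomial, Polynomial.smul_eq_C_mul, map_natCast, mul_comm]

theorem binomTail_eq_X_pow_mul {r k : ℕ} (hk : r ≤ k) :
    binomTail R r k =
      X ^ (k - r) * ∑ i ∈ range r, (k.choose i : R) • bernsteinMonomial R (r - 1) i := by
  rw [binomTail, mul_sum]
  refine sum_congr rfl fun i hi => ?_
  rw [mul_smul_comm, bernsteinMonomial, show k - i - 1 = (k - r) + (r - 1 - i) by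
    have := mem_range.mp hi; omega, pow_add, mul_left_comm]

theorem natDegree_binomTail_le {r k : ℕ} (hk : r ≤ k) :
    (binomTail R r k).natDegree ≤ k - 1 := by
  refine natDegree_sum_le_of_forall_le _ _ fun i hi => ?_
  have hi := mem_range.mp hi
  refine (natDegree_smul_le _ _).trans (natDegree_mul_le.trans ?_)
  have h1 : ((1 - X : R[X]) ^ i).natDegree ≤ i :=
    (natDegree_pow_le_of_le (m := 1) i (by compute_degree)).trans (by simp)
  have h2 : (X ^ (k - i - 1) : R[X]).natDegree ≤ k - i - 1 := natDegree_X_pow_le _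
  omega

end CommRing

theorem sum_smul_add_shift_eq_sum_smul {S M : Type*} [Semiring S] [AddCommMonoid M]
    [Module S M] (s : ℕ) (a b : ℕ → S) (t : ℕ → M) (h0 : a 0 = b 0)
    (hsucc : ∀ i < s, a (i + 1) = b (i + 1) + b i) (hs : b s = 0) :
    ∑ i ∈ range (s + 1), b i • (t i + t (i + 1)) = ∑ i ∈ range (s + 1), a i • t i := by
  have hshift : ∑ i ∈ range s, a (i + 1) • t (i + 1)
      = ∑ i ∈ range s, b (i + 1) • t (i + 1) + ∑ i ∈ range s, b i • t (i + 1) := by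
    rw [← sum_add_distrib]
    exact sum_congr rfl fun i hi => by rw [hsucc i (mem_range.mp hi), add_smul]
  rw [sum_range_succ' (fun i => a i • t i), hshift, h0, add_right_comm,
    ← sum_range_succ' (fun i => b i • t i), ← add_zero (∑ i ∈ range s, b i • t (i + 1)),
    ← zero_smul S (t (s + 1)), ← hs, ← sum_range_succ (fun i => b i • t (i + 1)),
    ← sum_add_distrib]
  simp only [smul_add]

section Field

variable (K : Type*) [Field K]

noncomputable def weight (r k : ℕ) : K := (r - 1) / (k * (k - 1))

noncomputable def tailCoeff (r M i : ℕ) : K :=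
  M.choose i * (M * (r - 1 - i) + i) / (M * (M - 1))

-- The polynomial `Q_M` of the header: `X ^ (M - r) * tailPoly K r M` is the tail
-- `∑_{k ≥ M} χ_k g_k` of the series.
noncomputable def tailPoly (r M : ℕ) : K[X] :=
  ∑ i ∈ range r, tailCoeff K r M i • bernsteinMonomial K (r - 1) i

variable {K} [CharZero K]

theorem natCast_sub_one_ne_zero {M : ℕ} (hM : 2 ≤ M) : (M : K) - 1 ≠ 0 := by
  rw [← Nat.cast_pred (by omega)]
  exact Nat.cast_ne_zero.mpr (by omega)

theorem tailCoeff_self {r i : ℕ} (hr : 2 ≤ r) (hi : i < r) :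
    tailCoeff K r r i = (r - 1).choose i := by
  have hpascal : ((r - 1).choose i * r : K) = r.choose i * (r - i) := by
    have h := congrArg (Nat.cast (R := K)) (Nat.choose_mul_succ_eq (r - 1) i)
    rw [Nat.sub_add_cancel (by omega : 1 ≤ r)] at h
    push_cast [Nat.cast_sub hi.le] at h
    exact h
  have hr0 : (r : K) ≠ 0 := Nat.cast_ne_zero.mpr (by omega)
  have hr1 := natCast_sub_one_ne_zero (K := K) hr
  rw [tailCoeff]
  field_simp
  linear_combination (1 - (r : K)) * hpascal

theorem tailPoly_self {r : ℕ} (hr : 2 ≤ r) : tailPoly K r r = 1 := by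
  rw [tailPoly, ← sum_choose_smul_bernsteinMonomial (r - 1),
    Nat.sub_add_cancel (by omega : 1 ≤ r)]
  exact sum_congr rfl fun i hi => by rw [tailCoeff_self hr (mem_range.mp hi)]

theorem tailCoeff_sub_weight_mul_choose (r : ℕ) {M : ℕ} (hM : 2 ≤ M) (i : ℕ) :
    tailCoeff K r M i - weight K r M * M.choose i = M.choose i * (r - 1 - i) / M := by
  have hM0 : (M : K) ≠ 0 := Nat.cast_ne_zero.mpr (by omega)
  have hM1 := natCast_sub_one_ne_zero (K := K) hM
  rw [tailCoeff, weight]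
  field_simp
  ring

theorem tailCoeff_succ_zero (r : ℕ) {M : ℕ} (hM : 1 ≤ M) :
    tailCoeff K r (M + 1) 0 = (r - 1) / M := by
  have hM0 : (M : K) ≠ 0 := Nat.cast_ne_zero.mpr (by omega)
  rw [tailCoeff, Nat.choose_zero_right]
  push_cast
  rw [add_sub_cancel_right]
  field_simp
  ring

theorem tailCoeff_succ_succ (r : ℕ) {M : ℕ} (hM : 1 ≤ M) (i : ℕ) :
    tailCoeff K r (M + 1) (i + 1) =
      M.choose (i + 1) * (r - 1 - (i + 1 : ℕ)) / M + M.choose i * (r - 1 - i) / M := by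
  have hpascal : ((M + 1).choose (i + 1) : K) = M.choose i + M.choose (i + 1) := by
    exact_mod_cast Nat.choose_succ_succ M i
  have habsorb : ((M + 1) * M.choose i : K) = (M + 1).choose (i + 1) * (i + 1) := by
    exact_mod_cast Nat.add_one_mul_choose_eq M i
  have hM0 : (M : K) ≠ 0 := Nat.cast_ne_zero.mpr (by omega)
  have hM1 : (M : K) + 1 ≠ 0 := by exact_mod_cast Nat.succ_ne_zero M
  rw [tailCoeff]
  push_cast
  rw [add_sub_cancel_right]
  field_simp
  linear_combination ((M : K) + 1) * (r - 2 - i) * hpascal - habsorb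

theorem tailPoly_eq_X_mul_add (r : ℕ) {M : ℕ} (hM : 2 ≤ M) :
    tailPoly K r M = X * tailPoly K r (M + 1) +
      weight K r M • ∑ i ∈ range r, (M.choose i : K) • bernsteinMonomial K (r - 1) i := by
  rcases r with _ | s
  · simp [tailPoly]
  set b : ℕ → K := fun i => M.choose i * ((s + 1 : ℕ) - 1 - i) / M
  have hs : b s = 0 := by simp [b]
  rw [← sub_eq_iff_eq_add]
  calc tailPoly K (s + 1) M - weight K (s + 1) M •
        ∑ i ∈ range (s + 1), (M.choose i : K) • bernsteinMonomial K (s + 1 - 1) i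
      = ∑ i ∈ range (s + 1),
          b i • (bernsteinMonomial K (s + 1) i + bernsteinMonomial K (s + 1) (i + 1)) := by
        rw [tailPoly, smul_sum, ← sum_sub_distrib]
        refine sum_congr rfl fun i hi => ?_
        rw [smul_smul, ← sub_smul, tailCoeff_sub_weight_mul_choose _ hM, Nat.add_sub_cancel,
          ← bernsteinMonomial_eq_add (mem_range_succ_iff.mp hi)]
    _ = ∑ i ∈ range (s + 1), tailCoeff K (s + 1) (M + 1) i • bernsteinMonomial K (s + 1) i :=
        sum_smul_add_shift_eq_sum_smul s _ b _
          (by simp [b, tailCoeff_succ_zero _ (by omega : 1 ≤ M)])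
          (fun i _ => tailCoeff_succ_succ _ (by omega) i) hs
    _ = X * tailPoly K (s + 1) (M + 1) := by
        rw [tailPoly, mul_sum, Nat.add_sub_cancel]
        refine sum_congr rfl fun i hi => ?_
        rw [mul_smul_comm, X_mul_bernsteinMonomial (mem_range_succ_iff.mp hi)]

theorem one_sub_sum_weight_smul_binomTail {r : ℕ} (hr : 2 ≤ r) (n : ℕ) :
    1 - ∑ k ∈ Ico r (r + n), weight K r k • binomTail K r k =
      X ^ n * tailPoly K r (r + n) := by
  induction n with
  | zero => simp [tailPoly_self hr]
  | succ n ih =>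
    rw [← add_assoc, sum_Ico_succ_top (by omega), ← sub_sub, ih,
      binomTail_eq_X_pow_mul (by omega), Nat.add_sub_cancel_left,
      tailPoly_eq_X_mul_add r (by omega : 2 ≤ r + n), pow_succ, mul_add, mul_smul_comm]
    ring

theorem tailPoly_eval_one {r M : ℕ} (hr : 1 ≤ r) (hM : 1 ≤ M) :
    (tailPoly K r M).eval 1 = (r - 1) / (M - 1) := by
  have hM0 : (M : K) ≠ 0 := Nat.cast_ne_zero.mpr (by omega)
  rw [tailPoly, eval_finsetSum, sum_eq_single_of_mem 0 (mem_range.mpr hr)]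
  · simp only [eval_smul, bernsteinMonomial, eval_mul, eval_pow, eval_one, eval_X, pow_zero,
      one_pow, mul_one, smul_eq_mul, tailCoeff, Nat.choose_zero_right]
    push_cast
    rw [one_mul, sub_zero, add_zero, mul_div_mul_left _ _ hM0]
  · intro i _ hi
    simp [bernsteinMonomial, zero_pow hi]

end Field

section LinearOrderedField
variable {K : Type*} [Field K] [LinearOrder K] [IsStrictOrderedRing K] {x : K}

theorem bernsteinMonomial_eval_nonneg (n i : ℕ) (hx : x ∈ Set.Icc 0 1) :
    0 ≤ (bernsteinMonomial K n i).eval x := by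
  simp only [bernsteinMonomial, eval_mul, eval_pow, eval_sub, eval_one, eval_X]
  exact mul_nonneg (pow_nonneg (sub_nonneg.mpr hx.2) i) (pow_nonneg hx.1 _)

theorem bernsteinMonomial_eval_le_one (n i : ℕ) (hx : x ∈ Set.Icc 0 1) :
    (bernsteinMonomial K n i).eval x ≤ 1 := by
  simp only [bernsteinMonomial, eval_mul, eval_pow, eval_sub, eval_one, eval_X]
  exact mul_le_one₀ (pow_le_one₀ (sub_nonneg.mpr hx.2) (sub_le_self _ hx.1))
    (pow_nonneg hx.1 _) (pow_le_one₀ hx.1 hx.2)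

theorem binomTail_eval_nonneg (r k : ℕ) (hx : x ∈ Set.Icc 0 1) :
    0 ≤ (binomTail K r k).eval x := by
  rw [binomTail, eval_finsetSum]
  refine sum_nonneg fun i _ => ?_
  simp only [eval_smul, eval_mul, eval_pow, eval_sub, eval_one, eval_X, smul_eq_mul]
  exact mul_nonneg (Nat.cast_nonneg _)
    (mul_nonneg (pow_nonneg (sub_nonneg.mpr hx.2) _) (pow_nonneg hx.1 _))

theorem weight_nonneg {r : ℕ} (hr : 1 ≤ r) (k : ℕ) : 0 ≤ weight K r k := by
  rcases k with _ | k
  · simp [weight]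
  rw [weight]
  push_cast
  rw [add_sub_cancel_right]
  have : (1 : K) ≤ r := by exact_mod_cast hr
  exact div_nonneg (by linarith) (by positivity)

theorem tailCoeff_pos {r M i : ℕ} (hr : 2 ≤ r) (hM : r ≤ M) (hi : i < r) :
    0 < tailCoeff K r M i := by
  have hM1 : (1 : K) < M := by exact_mod_cast (by omega : 1 < M)
  have hi1 : (i : K) + 1 ≤ r := by exact_mod_cast hi
  have hchoose : (0 : K) < M.choose i := by exact_mod_cast Nat.choose_pos (by omega)
  have hnum : (0 : K) < M * (r - 1 - i) + i := by
    rcases i.eq_zero_or_pos with rfl | hi0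
    · have : (2 : K) ≤ r := by exact_mod_cast hr
      simp only [Nat.cast_zero, sub_zero, add_zero]
      exact mul_pos (by linarith) (by linarith)
    · have : (0 : K) < i := by exact_mod_cast hi0
      nlinarith
  exact div_pos (mul_pos hchoose hnum) (mul_pos (by linarith) (by linarith))

theorem tailCoeff_le_mul_choose (r : ℕ) {M : ℕ} (hM : 2 ≤ M) (i : ℕ) :
    tailCoeff K r M i ≤ r * M.choose i := by
  have hM2 : (2 : K) ≤ M := by exact_mod_cast hM
  have hr : (0 : K) ≤ r := Nat.cast_nonneg r
  have hi : (0 : K) ≤ i := Nat.cast_nonneg i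
  rw [tailCoeff, mul_div_assoc, mul_comm (r : K)]
  refine mul_le_mul_of_nonneg_left ?_ (Nat.cast_nonneg _)
  rw [div_le_iff₀ (by nlinarith)]
  nlinarith [mul_nonneg (mul_nonneg hr (by linarith : (0 : K) ≤ M))
    (by linarith : (0 : K) ≤ M - 2), mul_nonneg hi (by linarith : (0 : K) ≤ M - 1)]

theorem tailPoly_eval_pos {r M : ℕ} (hr : 2 ≤ r) (hM : r ≤ M) (hx : x ∈ Set.Icc 0 1) :
    0 < (tailPoly K r M).eval x := by
  rw [tailPoly, eval_finsetSum]
  simp only [eval_smul, smul_eq_mul]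
  have hterm : ∀ i ∈ range r,
      0 ≤ tailCoeff K r M i * (bernsteinMonomial K (r - 1) i).eval x :=
    fun i hi => mul_nonneg (tailCoeff_pos hr hM (mem_range.mp hi)).le
      (bernsteinMonomial_eval_nonneg _ _ hx)
  refine sum_pos' hterm ?_
  rcases hx.1.eq_or_lt with rfl | hx0
  · refine ⟨r - 1, mem_range.mpr (by omega), mul_pos (tailCoeff_pos hr hM (by omega)) ?_⟩
    simp [bernsteinMonomial]
  · refine ⟨0, mem_range.mpr (by omega), mul_pos (tailCoeff_pos hr hM (by omega)) ?_⟩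
    simpa [bernsteinMonomial] using pow_pos hx0 _

theorem tailPoly_eval_le {r M : ℕ} (hr : 2 ≤ r) (hM : r ≤ M) (hx : x ∈ Set.Icc 0 1) :
    (tailPoly K r M).eval x ≤ r ^ 2 * M ^ r := by
  rw [tailPoly, eval_finsetSum]
  simp only [eval_smul, smul_eq_mul]
  have hterm : ∀ i ∈ range r,
      tailCoeff K r M i * (bernsteinMonomial K (r - 1) i).eval x ≤ r * M ^ r := by
    intro i hi
    have hchoose : (M.choose i : K) ≤ M ^ r := by
      exact_mod_cast (Nat.choose_le_pow M i).trans
        (Nat.pow_le_pow_right (by omega) (mem_range.mp hi).le)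
    calc tailCoeff K r M i * (bernsteinMonomial K (r - 1) i).eval x
        ≤ tailCoeff K r M i * 1 :=
          mul_le_mul_of_nonneg_left (bernsteinMonomial_eval_le_one _ _ hx)
            (tailCoeff_pos hr hM (mem_range.mp hi)).le
      _ ≤ r * M.choose i := by rw [mul_one]; exact tailCoeff_le_mul_choose r (by omega) i
      _ ≤ r * M ^ r := mul_le_mul_of_nonneg_left hchoose (Nat.cast_nonneg r)
  calc _ ≤ ∑ _i ∈ range r, (r * M ^ r : K) := sum_le_sum hterm
    _ = r ^ 2 * M ^ r := by rw [sum_const, card_range, nsmul_eq_mul]; ring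

end LinearOrderedField

theorem tendsto_pow_mul_tailPoly_eval {r : ℕ} (hr : 2 ≤ r) {x : ℝ} (hx : x ∈ Set.Icc 0 1) :
    Tendsto (fun n => x ^ n * (tailPoly ℝ r (r + n)).eval x) atTop (𝓝 0) := by
  rcases hx.2.eq_or_lt with rfl | hx1
  · have hden : Tendsto (fun n : ℕ => ((r + n : ℕ) : ℝ) - 1) atTop atTop := by
      push_cast
      exact tendsto_atTop_add_const_right _ _
        (tendsto_atTop_add_const_left _ _ tendsto_natCast_atTop_atTop)
    refine (hden.const_div_atTop ((r : ℝ) - 1)).congr fun n => ?_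
    rw [one_pow, one_mul, tailPoly_eval_one (by omega) (by omega)]
  · have hx0 := hx.1
    have hbound : ∀ᶠ n : ℕ in atTop,
        x ^ n * (tailPoly ℝ r (r + n)).eval x ≤ r ^ 2 * 2 ^ r * ((n : ℝ) ^ r * x ^ n) := by
      filter_upwards [eventually_ge_atTop r] with n hn
      have hrn : ((r + n : ℕ) : ℝ) ^ r ≤ 2 ^ r * (n : ℝ) ^ r := by
        rw [← mul_pow]
        gcongr
        exact_mod_cast (by omega : r + n ≤ 2 * n)
      calc x ^ n * (tailPoly ℝ r (r + n)).eval x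
          ≤ x ^ n * (r ^ 2 * ((r + n : ℕ) : ℝ) ^ r) :=
            mul_le_mul_of_nonneg_left (tailPoly_eval_le hr (by omega) hx) (pow_nonneg hx.1 n)
        _ ≤ x ^ n * (r ^ 2 * (2 ^ r * (n : ℝ) ^ r)) := by gcongr
        _ = r ^ 2 * 2 ^ r * ((n : ℝ) ^ r * x ^ n) := by ring
    refine squeeze_zero' (Eventually.of_forall fun n =>
      mul_nonneg (pow_nonneg hx.1 n) (tailPoly_eval_pos hr (by omega) hx).le) hbound ?_
    simpa using (tendsto_pow_const_mul_const_pow_of_lt_one r hx.1 hx1).const_mul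
      ((r : ℝ) ^ 2 * 2 ^ r)

theorem hasSum_weight_mul_binomTail_eval {r : ℕ} (hr : 2 ≤ r) (m : ℕ) {x : ℝ}
    (hx : x ∈ Set.Icc 0 1) :
    HasSum (fun j => weight ℝ r (r + m + j) * (binomTail ℝ r (r + m + j)).eval x)
      (x ^ m * (tailPoly ℝ r (r + m)).eval x) := by
  have hpartial : ∀ n, ∑ k ∈ Ico r (r + n), weight ℝ r k * (binomTail ℝ r k).eval x
      = 1 - x ^ n * (tailPoly ℝ r (r + n)).eval x := fun n => by
    have h := congrArg (eval x) (one_sub_sum_weight_smul_binomTail (K := ℝ) hr n)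
    simp only [eval_sub, eval_one, eval_finsetSum, eval_smul, smul_eq_mul, eval_mul, eval_pow,
      eval_X] at h
    linarith
  rw [hasSum_iff_tendsto_nat_of_nonneg fun j =>
    mul_nonneg (weight_nonneg (by omega) _) (binomTail_eval_nonneg _ _ hx)]
  have hlim := tendsto_const_nhds (x := x ^ m * (tailPoly ℝ r (r + m)).eval x) |>.sub
    ((tendsto_pow_mul_tailPoly_eval hr hx).comp (tendsto_add_atTop_nat m))
  rw [sub_zero] at hlim
  refine hlim.congr fun N => ?_
  have hsplit := sum_Ico_consecutive (fun k => weight ℝ r k * (binomTail ℝ r k).eval x)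
    (show r ≤ r + m by omega) (show r + m ≤ r + (N + m) by omega)
  rw [hpartial m, hpartial (N + m), sum_Ico_eq_sum_range,
    show r + (N + m) - (r + m) = N by omega] at hsplit
  simp only [Function.comp_apply]
  linarith

theorem stmt_14_general (r ν : ℕ) (hr : 2 ≤ r) :
    let g : ℕ → Polynomial ℝ := fun k =>
      ∑ i ∈ Finset.range r, (k.choose i : ℝ) • ((1 - X) ^ i * X ^ (k - i - 1))
    let gχ : Polynomial ℝ :=
      ∑ k ∈ Finset.Icc r (ν + r - 1), (((r : ℝ) - 1) / (k * ((k : ℝ) - 1))) • g k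
    gχ.natDegree ≤ ν + r - 2 ∧
    ∃ P : Polynomial ℝ, P.natDegree ≤ r - 2 ∧
      (∀ x ∈ Set.Icc (0 : ℝ) 1, 0 < P.eval x) ∧
      (1 - gχ : Polynomial ℝ) = X ^ ν * P ∧
      (∀ x ∈ Set.Icc (0 : ℝ) 1,
        1 - gχ.eval x =
          ∑' j : ℕ, (((r : ℝ) - 1) / ((j + ν + r) * ((j : ℝ) + ν + r - 1))) *
            (g (j + ν + r)).eval x) := by
  intro g gχ
  have hgχ : gχ = ∑ k ∈ Ico r (r + ν), weight ℝ r k • binomTail ℝ r k := by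
    rw [show Ico r (r + ν) = Icc r (ν + r - 1) by ext; simp only [mem_Ico, mem_Icc]; omega]
    rfl
  have hP : 1 - gχ = X ^ ν * tailPoly ℝ r (r + ν) :=
    hgχ ▸ one_sub_sum_weight_smul_binomTail hr ν
  have hdeg : gχ.natDegree ≤ ν + r - 2 := hgχ ▸ natDegree_sum_le_of_forall_le _ _ fun k hk =>
    (natDegree_smul_le _ _).trans <| (natDegree_binomTail_le (mem_Ico.mp hk).1).trans
      (by have := (mem_Ico.mp hk).2; omega)
  have hpos : ∀ x ∈ Set.Icc (0 : ℝ) 1, 0 < (tailPoly ℝ r (r + ν)).eval x :=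
    fun x hx => tailPoly_eval_pos hr (by omega) hx
  refine ⟨hdeg, tailPoly ℝ r (r + ν), ?_, hpos, hP, fun x hx => ?_⟩
  · have hne : tailPoly ℝ r (r + ν) ≠ 0 := fun h => by
      simpa [h] using hpos 0 ⟨le_rfl, zero_le_one⟩
    have h := (natDegree_sub_le 1 gχ).trans (max_le (by simp) hdeg)
    rw [hP, natDegree_X_pow_mul ν hne] at h
    omega
  · have heval : 1 - gχ.eval x = x ^ ν * (tailPoly ℝ r (r + ν)).eval x := by
      simpa using congrArg (eval x) hP
    rw [heval, ← (hasSum_weight_mul_binomTail_eval hr ν hx).tsum_eq]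
    refine tsum_congr fun j => ?_
    rw [show r + ν + j = j + ν + r by ring, weight,
      show g (j + ν + r) = binomTail ℝ r (j + ν + r) from rfl]
    push_cast
    ring

/-- For `r ≥ 2`, `ν ≥ 1` and weights `χ_k = (r-1)/(k(k-1))` for `r ≤ k ≤ ν+r-1`
(and `0` beyond): `g_χ = ∑_{k=r}^{ν+r-1} χ_k g_k` is a polynomial of degree at most
`ν+r-2`, and `1 - g_χ(x) = ∑_{k=ν+r}^∞ (r-1)/(k(k-1)) g_k(x) = x^ν P(x)` on `[0,1]`
for a polynomial `P` of degree at most `r-2` with `P > 0` on `[0,1]`. -/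
theorem stmt_14 (r ν : ℕ) (hr : 2 ≤ r) (hν : 1 ≤ ν) :
    let g : ℕ → Polynomial ℝ := fun k =>
      ∑ i ∈ Finset.range r, (k.choose i : ℝ) • ((1 - X) ^ i * X ^ (k - i - 1))
    let gχ : Polynomial ℝ :=
      ∑ k ∈ Finset.Icc r (ν + r - 1), (((r : ℝ) - 1) / (k * ((k : ℝ) - 1))) • g k
    gχ.natDegree ≤ ν + r - 2 ∧
    ∃ P : Polynomial ℝ, P.natDegree ≤ r - 2 ∧
      (∀ x ∈ Set.Icc (0 : ℝ) 1, 0 < P.eval x) ∧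
      (1 - gχ : Polynomial ℝ) = X ^ ν * P ∧
      (∀ x ∈ Set.Icc (0 : ℝ) 1,
        1 - gχ.eval x =
          ∑' j : ℕ, (((r : ℝ) - 1) / ((j + ν + r) * ((j : ℝ) + ν + r - 1))) *
            (g (j + ν + r)).eval x) :=
  stmt_14_general r ν hr
end
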